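/- arXiv:1803.00641 — 2 statements merged into one kernel-verified Lean document; each statement's English description precedes it below -/
import Mathlib

section
/- Under the Bregman setup, suppose that the Gâteaux derivative map b' : U → X* is uniformly continuous on every bounded convex subset of U. Let (x_i) and (y_i) be sequences in U such that at least one of them is norm-bounded and lim_{i→∞} ‖x_i − y_i‖ = 0. Then for every x ∈ C, lim_{i→∞} (B(x, x_i) − B(x, y_i)) = 0. -/
/-!
Write `B(z, u) = b z - b u - b' u (z - u)`. The difference of divergences splits as
`B(z, x) - B(z, y) = B(y, x) + (b' y - b' x) (z - y)`, and the subgradient inequalities at `x`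
and `y` squeeze `B(y, x)` between `0` and `(b' y - b' x) (y - x)`. Hence the difference is at
most `‖b' y - b' x‖ (‖x - y‖ + ‖z - y‖)`. Both sequences lie in the bounded convex set
`convexHull (range x ∪ range y) ⊆ int C`, on which `b'` is uniformly continuous, so the first
factor tends to `0` while the second stays bounded.
-/

open Filter Topology Set Uniformity

theorem ConvexOn.le_sub_of_tendsto_slope {E : Type*} [AddCommGroup E] [Module ℝ E]
    {s : Set E} {f : E → ℝ} (hf : ConvexOn ℝ s f) {x y : E} (hx : x ∈ s) (hy : y ∈ s) {L : ℝ}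
    (hL : Tendsto (fun t : ℝ => (f (x + t • (y - x)) - f x) / t) (𝓝[>] 0) (𝓝 L)) :
    L ≤ f y - f x := by
  refine le_of_tendsto hL ?_
  filter_upwards [Ioo_mem_nhdsGT (zero_lt_one' ℝ)] with t ⟨ht0, ht1⟩
  have hconv := hf.2 hx hy (sub_nonneg.2 ht1.le) ht0.le (sub_add_cancel 1 t)
  rw [show (1 - t) • x + t • y = x + t • (y - x) by module, smul_eq_mul, smul_eq_mul] at hconv
  rw [div_le_iff₀ ht0]
  linarith

theorem abs_bregman_sub_bregman_le {E : Type*} [SeminormedAddCommGroup E]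
    [NormedSpace ℝ E] {b : E → ℝ} {φ ψ : E →L[ℝ] ℝ} {u v : E}
    (hφ : φ (v - u) ≤ b v - b u) (hψ : ψ (u - v) ≤ b u - b v) (z : E) :
    |(b z - b u - φ (z - u)) - (b z - b v - ψ (z - v))| ≤ ‖ψ - φ‖ * (‖u - v‖ + ‖z - v‖) := by
  have hsplit : (b z - b u - φ (z - u)) - (b z - b v - ψ (z - v))
      = (b v - b u - φ (v - u)) + (ψ - φ) (z - v) := by
    simp only [sub_apply, map_sub]
    ring
  have hbregman : |b v - b u - φ (v - u)| ≤ ‖ψ - φ‖ * ‖u - v‖ := by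
    have hupper : b v - b u - φ (v - u) ≤ (ψ - φ) (v - u) := by
      have := ψ.map_neg (u - v)
      simp only [neg_sub, sub_apply] at this ⊢
      linarith
    rw [abs_of_nonneg (sub_nonneg.2 hφ), norm_sub_rev u v]
    exact hupper.trans ((le_abs_self _).trans ((ψ - φ).le_opNorm _))
  rw [hsplit, mul_add]
  exact (abs_add_le _ _).trans (add_le_add hbregman ((ψ - φ).le_opNorm _))

theorem UniformContinuousOn.tendsto_dist_comp {α β ι : Type*} [PseudoMetricSpace α]
    [PseudoMetricSpace β] {f : α → β} {s : Set α} (hf : UniformContinuousOn f s)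
    {l : Filter ι} {u v : ι → α} (hu : ∀ i, u i ∈ s) (hv : ∀ i, v i ∈ s)
    (huv : Tendsto (fun i => dist (u i) (v i)) l (𝓝 0)) :
    Tendsto (fun i => dist (f (u i)) (f (v i))) l (𝓝 0) := by
  have hpair : Tendsto (fun i => (u i, v i)) l (𝓤 α ⊓ 𝓟 (s ×ˢ s)) :=
    tendsto_inf.2 ⟨tendsto_uniformity_iff_dist_tendsto_zero.2 huv,
      tendsto_principal.2 (.of_forall fun i => ⟨hu i, hv i⟩)⟩
  exact tendsto_uniformity_iff_dist_tendsto_zero.1 (Tendsto.comp hf hpair)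

theorem isBounded_range_of_tendsto_norm_sub {E : Type*} [SeminormedAddCommGroup E]
    {x y : ℕ → E} (hx : Bornology.IsBounded (range x))
    (hxy : Tendsto (fun i => ‖x i - y i‖) atTop (𝓝 0)) : Bornology.IsBounded (range y) := by
  have hsub : Bornology.IsBounded (range (x - y)) :=
    Metric.isBounded_range_of_tendsto _ (tendsto_zero_iff_norm_tendsto_zero.2 hxy)
  refine (isBounded_sub hx hsub).subset (range_subset_iff.2 fun i => ?_)
  exact ⟨x i, mem_range_self i, (x - y) i, mem_range_self i, sub_sub_cancel _ _⟩

theorem bregman_divergence_difference_tendsto_zero_general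
    {X : Type*} [NormedAddCommGroup X] [NormedSpace ℝ X]
    (C : Set X)
    (b : X → ℝ) (hbconv : ConvexOn ℝ C b)
    (b' : X → X →L[ℝ] ℝ)
    (hb' : ∀ y ∈ interior C, ∀ v : X,
      Tendsto (fun t : ℝ => (b (y + t • v) - b y) / t) (𝓝[≠] (0:ℝ)) (𝓝 (b' y v)))
    (hb'uc : ∀ W : Set X, W ⊆ interior C → Bornology.IsBounded W → Convex ℝ W →
      UniformContinuousOn b' W)
    (x y : ℕ → X) (hx : ∀ i, x i ∈ interior C) (hy : ∀ i, y i ∈ interior C)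
    (hbdd : Bornology.IsBounded (Set.range x) ∨ Bornology.IsBounded (Set.range y))
    (hdist : Tendsto (fun i => ‖x i - y i‖) atTop (𝓝 0)) :
    ∀ z ∈ C,
      Tendsto (fun i =>
        (b z - b (x i) - b' (x i) (z - x i)) - (b z - b (y i) - b' (y i) (z - y i)))
        atTop (𝓝 0) := by
  intro z _
  have hsubgradient {u v : X} (hu : u ∈ interior C) (hv : v ∈ interior C) :
      b' u (v - u) ≤ b v - b u :=
    hbconv.le_sub_of_tendsto_slope (interior_subset hu) (interior_subset hv)
      ((hb' u hu (v - u)).mono_left (nhdsGT_le_nhdsNE 0))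
  have hbounded : Bornology.IsBounded (range x ∪ range y) := by
    rcases hbdd with hxb | hyb
    · exact hxb.union (isBounded_range_of_tendsto_norm_sub hxb hdist)
    · refine (isBounded_range_of_tendsto_norm_sub hyb ?_).union hyb
      simpa only [norm_sub_rev] using hdist
  set W := convexHull ℝ (range x ∪ range y)
  have hxW (i : ℕ) : x i ∈ W := subset_convexHull ℝ _ (.inl (mem_range_self i))
  have hyW (i : ℕ) : y i ∈ W := subset_convexHull ℝ _ (.inr (mem_range_self i))
  have hWU : W ⊆ interior C :=
    convexHull_min (union_subset (range_subset_iff.2 hx) (range_subset_iff.2 hy))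
      hbconv.1.interior
  have hb'_tendsto : Tendsto (fun i => dist (b' (y i)) (b' (x i))) atTop (𝓝 0) :=
    (hb'uc W hWU (isBounded_convexHull.2 hbounded) (convex_convexHull ℝ _)).tendsto_dist_comp
      hyW hxW (by simpa only [dist_eq_norm, norm_sub_rev] using hdist)
  obtain ⟨D, hD⟩ := Metric.isBounded_iff.1 ((isBounded_convexHull.2 hbounded).insert z)
  refine squeeze_zero_norm (fun i => ?_) (by simpa using hb'_tendsto.mul_const (D + D))
  rw [Real.norm_eq_abs, dist_eq_norm]
  refine (abs_bregman_sub_bregman_le (hsubgradient (hx i) (hy i))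
    (hsubgradient (hy i) (hx i)) z).trans (mul_le_mul_of_nonneg_left ?_ (norm_nonneg _))
  rw [← dist_eq_norm, ← dist_eq_norm]
  exact add_le_add (hD (.inr (hxW i)) (.inr (hyW i))) (hD (mem_insert z W) (.inr (hyW i)))

/-- Under the Bregman setup, suppose `b' : U → X*` is uniformly
continuous on every bounded convex subset of `U`. If `(x_i)` and `(y_i)` are sequences
in `U`, at least one of them is norm-bounded, and `‖x_i − y_i‖ → 0`, then for every
`x ∈ C` one has `B(x, x_i) − B(x, y_i) → 0`. -/
theorem bregman_divergence_difference_tendsto_zero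
    {X : Type*} [NormedAddCommGroup X] [NormedSpace ℝ X]
    (C : Set X) (hC : C.Nonempty) (hCconv : Convex ℝ C)
    (hU : (interior C).Nonempty)
    (b : X → ℝ) (hbconv : ConvexOn ℝ C b)
    (b' : X → X →L[ℝ] ℝ)
    (hb' : ∀ y ∈ interior C, ∀ v : X,
      Tendsto (fun t : ℝ => (b (y + t • v) - b y) / t) (𝓝[≠] (0:ℝ)) (𝓝 (b' y v)))
    (hb'uc : ∀ W : Set X, W ⊆ interior C → Bornology.IsBounded W → Convex ℝ W →
      UniformContinuousOn b' W)
    (x y : ℕ → X) (hx : ∀ i, x i ∈ interior C) (hy : ∀ i, y i ∈ interior C)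
    (hbdd : Bornology.IsBounded (Set.range x) ∨ Bornology.IsBounded (Set.range y))
    (hdist : Tendsto (fun i => ‖x i - y i‖) atTop (𝓝 0)) :
    ∀ z ∈ C,
      Tendsto (fun i =>
        (b z - b (x i) - b' (x i) (z - x i)) - (b z - b (y i) - b' (y i) (z - y i)))
        atTop (𝓝 0) :=
  bregman_divergence_difference_tendsto_zero_general C b hbconv b' hb' hb'uc x y hx hy hbdd hdist
end

section
/- Let n ≥ 1, let ‖·‖ be an arbitrary norm on ℝⁿ, and let c₂ > 0 and c_∞ > 0 be constants with c₂‖v‖ ≤ ‖v‖₂ and ‖v‖_∞ ≤ c_∞‖v‖ for every v ∈ ℝⁿ, where ‖v‖₂ is the Euclidean norm and ‖v‖_∞ the max norm. Let b(z) := Σ_{k=1}^n z_k log(z_k) for z ∈ [0,∞)ⁿ, with the convention 0·log 0 := 0 (the negative Boltzmann–Gibbs–Shannon entropy). Then for every x ∈ [0,∞)ⁿ, every y ∈ (0,∞)ⁿ with ‖y‖ > 2‖x‖, and every λ ∈ (0,1): b(λx + (1−λ)y) + λ(1−λ)·(c₂²/(4c_∞))·‖x − y‖ ≤ λ b(x)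 + (1−λ) b(y). In other words, b is uniformly convex relative to ({x}, {y ∈ (0,∞)ⁿ : ‖y‖ > 2‖x‖}) with relative gauge ψ(t) = (c₂²/(4c_∞))·t. -/
/-!
On `[0, M]` the function `t ↦ t log t` has second derivative `1/t ≥ 1/M`, so it is
`M⁻¹`-strongly convex there; summing over coordinates, the convexity deficit of
`b` at `x, y ∈ [0, M]ⁿ` is at least `λ(1-λ) ‖x - y‖₂² / (2M)`. Take `M = c_∞ N(y)`, which
bounds every coordinate of `x` and `y` because `N x < N y`. Since
`N(x - y) ≥ N y - N x > N y / 2`, we get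
`‖x - y‖₂² ≥ c₂² N(x - y)² ≥ c₂² N(x - y) N(y) / 2`, and the deficit dominates
`(c₂² / (4 c_∞)) N(x - y)`.
-/

open Real Set

theorem strongConvexOn_of_hasDerivWithinAt2_ge {D : Set ℝ} (hD : Convex ℝ D) {f f' f'' : ℝ → ℝ}
    {m : ℝ} (hf : ContinuousOn f D)
    (hf' : ∀ x ∈ interior D, HasDerivWithinAt f (f' x) (interior D) x)
    (hf'' : ∀ x ∈ interior D, HasDerivWithinAt f' (f'' x) (interior D) x)
    (hm : ∀ x ∈ interior D, m ≤ f'' x) : StrongConvexOn D m f := by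
  have hsq : (fun x ↦ f x - m / 2 * ‖x‖ ^ 2) = fun x ↦ f x - m / 2 * x ^ 2 := by
    simp only [Real.norm_eq_abs, sq_abs]
  rw [strongConvexOn_iff_convex, hsq]
  refine convexOn_of_hasDerivWithinAt2_nonneg (f' := fun x ↦ f' x - m * x)
    (f'' := fun x ↦ f'' x - m) hD (hf.sub (by fun_prop)) (fun x hx ↦ ?_) (fun x hx ↦ ?_)
    (fun x hx ↦ sub_nonneg.2 (hm x hx))
  · exact (hf' x hx).sub (((hasDerivWithinAt_pow 2 x).const_mul (m / 2)).congr_deriv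
      (by norm_num; ring))
  · exact (hf'' x hx).sub (((hasDerivWithinAt_id x _).const_mul m).congr_deriv (mul_one m))

theorem Real.strongConvexOn_mul_log_Icc (M : ℝ) :
    StrongConvexOn (Icc 0 M) M⁻¹ fun x ↦ x * log x := by
  refine strongConvexOn_of_hasDerivWithinAt2_ge (convex_Icc 0 M) continuous_mul_log.continuousOn
    (f' := fun x ↦ log x + 1) (f'' := fun x ↦ x⁻¹) ?_ ?_ ?_ <;> rw [interior_Icc]
  · exact fun x hx ↦ (hasDerivAt_mul_log hx.1.ne').hasDerivWithinAt
  · exact fun x hx ↦ ((hasDerivAt_log hx.1.ne').add_const 1).hasDerivWithinAt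
  · exact fun x hx ↦ inv_anti₀ hx.1 hx.2.le

theorem Real.sum_mul_log_strongConvexity_Icc {ι : Type*} [Fintype ι] {M l : ℝ} {x y : ι → ℝ}
    (hx : ∀ k, x k ∈ Icc 0 M) (hy : ∀ k, y k ∈ Icc 0 M) (hl : l ∈ Icc (0 : ℝ) 1) :
    ∑ k, (l * x k + (1 - l) * y k) * log (l * x k + (1 - l) * y k)
        + l * (1 - l) * (∑ k, (x k - y k) ^ 2) / (2 * M)
      ≤ l * ∑ k, x k * log (x k) + (1 - l) * ∑ k, y k * log (y k) := by
  have hcoord : ∀ k, (l * x k + (1 - l) * y k) * log (l * x k + (1 - l) * y k)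
      + l * (1 - l) * (x k - y k) ^ 2 / (2 * M)
        ≤ l * (x k * log (x k)) + (1 - l) * (y k * log (y k)) := fun k ↦ by
    have := (strongConvexOn_mul_log_Icc M).2 (hx k) (hy k) hl.1 (sub_nonneg.2 hl.2)
      (add_sub_cancel l 1)
    simp only [smul_eq_mul, Real.norm_eq_abs, sq_abs] at this
    have hmod : l * (1 - l) * (M⁻¹ / 2 * (x k - y k) ^ 2)
        = l * (1 - l) * (x k - y k) ^ 2 / (2 * M) := by ring
    linarith
  have hsum := Finset.sum_le_sum fun k (_ : k ∈ Finset.univ) ↦ hcoord k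
  simp only [Finset.sum_add_distrib, ← Finset.mul_sum, ← Finset.sum_div] at hsum
  linarith

theorem Seminorm.le_two_mul_map_sub {𝕜 E : Type*} [SeminormedRing 𝕜] [AddCommGroup E]
    [Module 𝕜 E] (p : Seminorm 𝕜 E) {x y : E} (h : 2 * p x ≤ p y) : p y ≤ 2 * p (x - y) := by
  have := (le_abs_self _).trans ((abs_sub_comm _ _).trans_le (abs_sub_map_le_sub p x y))
  linarith

theorem shannon_entropy_relative_uniform_convexity_general
    (n : ℕ) (N : (Fin n → ℝ) → ℝ)
    (hN_add : ∀ v w : Fin n → ℝ, N (v + w) ≤ N v + N w)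
    (hN_smul : ∀ (a : ℝ) (v : Fin n → ℝ), N (a • v) = |a| * N v)
    (c₂ cinf : ℝ) (hc₂ : 0 < c₂) (hcinf : 0 < cinf)
    (h2 : ∀ v : Fin n → ℝ, c₂ * N v ≤ Real.sqrt (∑ k, (v k) ^ 2))
    (hinf : ∀ (v : Fin n → ℝ) (k : Fin n), |v k| ≤ cinf * N v) :
    ∀ x : Fin n → ℝ, (∀ k, 0 ≤ x k) →
    ∀ y : Fin n → ℝ, (∀ k, 0 < y k) → 2 * N x < N y →
    ∀ l ∈ Set.Ioo (0:ℝ) 1,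
      (∑ k, (l * x k + (1 - l) * y k) * Real.log (l * x k + (1 - l) * y k))
          + l * (1 - l) * (c₂ ^ 2 / (4 * cinf)) * N (x - y)
        ≤ l * ∑ k, x k * Real.log (x k)
          + (1 - l) * ∑ k, y k * Real.log (y k) := by
  intro x hx y hy hxy l hl
  let p : Seminorm ℝ (Fin n → ℝ) := .of N hN_add (by simpa only [Real.norm_eq_abs] using hN_smul)
  have hN_nonneg : ∀ v, 0 ≤ N v := apply_nonneg p
  have hNy : 0 < N y := by linarith [hN_nonneg x]
  have hD : N y ≤ 2 * N (x - y) := p.le_two_mul_map_sub hxy.le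
  have hS : c₂ ^ 2 * N (x - y) ^ 2 ≤ ∑ k, (x k - y k) ^ 2 := by
    simpa only [mul_pow, Pi.sub_apply] using
      (Real.le_sqrt (by positivity [hN_nonneg (x - y)]) (by positivity)).1 (h2 (x - y))
  have hgauge : c₂ ^ 2 / (4 * cinf) * N (x - y) ≤ (∑ k, (x k - y k) ^ 2) / (2 * (cinf * N y)) :=
    calc c₂ ^ 2 / (4 * cinf) * N (x - y) = c₂ ^ 2 * N (x - y) * N y / (4 * (cinf * N y)) := by
          field_simp
      _ ≤ c₂ ^ 2 * N (x - y) * (2 * N (x - y)) / (4 * (cinf * N y)) := by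
          gcongr
          exact mul_nonneg (sq_nonneg c₂) (hN_nonneg _)
      _ = c₂ ^ 2 * N (x - y) ^ 2 / (2 * (cinf * N y)) := by ring
      _ ≤ (∑ k, (x k - y k) ^ 2) / (2 * (cinf * N y)) := by gcongr
  have hconv := Real.sum_mul_log_strongConvexity_Icc (M := cinf * N y) (l := l)
    (fun k ↦ ⟨hx k, (le_abs_self _).trans ((hinf x k).trans (by gcongr; linarith))⟩)
    (fun k ↦ ⟨(hy k).le, (le_abs_self _).trans (hinf y k)⟩) (Ioo_subset_Icc_self hl)
  rw [mul_div_assoc] at hconv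
  have hl_mul : 0 ≤ l * (1 - l) := mul_nonneg hl.1.le (sub_nonneg.2 hl.2.le)
  linarith [mul_le_mul_of_nonneg_left hgauge hl_mul]

/-- Relative uniform convexity of the negative
Boltzmann–Gibbs–Shannon entropy `b(z) = Σ z_k log z_k` on `ℝⁿ` with an arbitrary
norm `N` (with equivalence constants `c₂‖v‖ ≤ ‖v‖₂` and `‖v‖_∞ ≤ c_∞‖v‖`): for every
`x ∈ [0,∞)ⁿ`, every `y ∈ (0,∞)ⁿ` with `N y > 2 N x`, and every `λ ∈ (0,1)`,
`b(λx + (1−λ)y) + λ(1−λ)(c₂²/(4c_∞)) N(x − y) ≤ λ b(x) + (1−λ) b(y)`. -/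
theorem shannon_entropy_relative_uniform_convexity
    (n : ℕ) (hn : 1 ≤ n) (N : (Fin n → ℝ) → ℝ)
    (hN_add : ∀ v w : Fin n → ℝ, N (v + w) ≤ N v + N w)
    (hN_smul : ∀ (a : ℝ) (v : Fin n → ℝ), N (a • v) = |a| * N v)
    (c₂ cinf : ℝ) (hc₂ : 0 < c₂) (hcinf : 0 < cinf)
    (h2 : ∀ v : Fin n → ℝ, c₂ * N v ≤ Real.sqrt (∑ k, (v k) ^ 2))
    (hinf : ∀ (v : Fin n → ℝ) (k : Fin n), |v k| ≤ cinf * N v) :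
    ∀ x : Fin n → ℝ, (∀ k, 0 ≤ x k) →
    ∀ y : Fin n → ℝ, (∀ k, 0 < y k) → 2 * N x < N y →
    ∀ l ∈ Set.Ioo (0:ℝ) 1,
      (∑ k, (l * x k + (1 - l) * y k) * Real.log (l * x k + (1 - l) * y k))
          + l * (1 - l) * (c₂ ^ 2 / (4 * cinf)) * N (x - y)
        ≤ l * ∑ k, x k * Real.log (x k)
          + (1 - l) * ∑ k, y k * Real.log (y k) :=
  shannon_entropy_relative_uniform_convexity_general n N hN_add hN_smul c₂ cinf hc₂ hcinf h2 hinf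
end
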